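/- Let m ≥ 1 be real and x, y ≥ 0. Define V_m(x,y) = (1+x+y)^m. Then for λ ≥ γ/(1+x) and μ ≥ γ/(1+y) (with γ > 0), λ·(V_m(x,y) − V_m(0,y)) + μ·(V_m(x,y) − V_m(x,0)) ≥ γ·(x/(1+x) + y/(1+y))·(1+x+y)^{m−1}. -/

import Mathlib

open Real

/-- Since `a ^ m - (a - b) * a ^ (m - 1) = b * a ^ (m - 1)`, this amounts to
`b ^ (m - 1) ≤ a ^ (m - 1)`. -/
theorem Real.sub_mul_rpow_sub_one_le_rpow_sub_rpow {a b m : ℝ} (hm : 1 ≤ m) (hb : 0 < b)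
    (hba : b ≤ a) : (a - b) * a ^ (m - 1) ≤ a ^ m - b ^ m := by
  have ha : 0 < a := hb.trans_le hba
  have hpow : b ^ (m - 1) ≤ a ^ (m - 1) := rpow_le_rpow hb.le hba (by linarith)
  have hb_pow : b ^ m = b * b ^ (m - 1) := by
    rw [mul_comm, ← rpow_add_one hb.ne', sub_add_cancel]
  have ha_pow : a ^ m = a * a ^ (m - 1) := by
    rw [mul_comm, ← rpow_add_one ha.ne', sub_add_cancel]
  rw [ha_pow, hb_pow]
  linarith [mul_le_mul_of_nonneg_left hpow hb.le]

theorem generator_drop_lower_bound (m γ x y lam mu : ℝ) (hm : 1 ≤ m) (hγ : 0 < γ)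
    (hx : 0 ≤ x) (hy : 0 ≤ y)
    (hlam : γ / (1 + x) ≤ lam) (hmu : γ / (1 + y) ≤ mu) :
    γ * (x / (1 + x) + y / (1 + y)) * (1 + x + y) ^ (m - 1)
      ≤ lam * ((1 + x + y) ^ m - (1 + 0 + y) ^ m)
        + mu * ((1 + x + y) ^ m - (1 + x + 0) ^ m) := by
  set A := (1 + x + y) ^ (m - 1)
  have hA : 0 ≤ A := rpow_nonneg (by positivity) _
  have drop_x : x * A ≤ (1 + x + y) ^ m - (1 + y) ^ m := by
    convert sub_mul_rpow_sub_one_le_rpow_sub_rpow (a := 1 + x + y) (b := 1 + y) hm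
      (by positivity) (by linarith) using 2
    ring
  have drop_y : y * A ≤ (1 + x + y) ^ m - (1 + x) ^ m := by
    convert sub_mul_rpow_sub_one_le_rpow_sub_rpow (a := 1 + x + y) (b := 1 + x) hm
      (by positivity) (by linarith) using 2
    ring
  have hlam0 : 0 ≤ lam := (by positivity : 0 ≤ γ / (1 + x)).trans hlam
  have hmu0 : 0 ≤ mu := (by positivity : 0 ≤ γ / (1 + y)).trans hmu
  simp only [add_zero]
  calc γ * (x / (1 + x) + y / (1 + y)) * A
      = γ / (1 + x) * (x * A) + γ / (1 + y) * (y * A) := by ring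
    _ ≤ lam * ((1 + x + y) ^ m - (1 + y) ^ m) + mu * ((1 + x + y) ^ m - (1 + x) ^ m) :=
        add_le_add (mul_le_mul hlam drop_x (by positivity) hlam0)
          (mul_le_mul hmu drop_y (by positivity) hmu0)
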